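/- Let ρ : {1,2,3,…} → ℝ, let F(z) = ∑_{n≥1} ( ∑_{T plane tree, |T|=n} ∏_{v∈T} ρ(h_v) ) z^n be the hook-weight generating function of plane trees, and let G(z) = (1 − F(z))^{-1} be the plane forest generating function (G has constant term 1, hence is invertible in the ring of formal power series over ℝ). Then for every n ≥ 1, ρ(n)·[z^{n-1}]G(z) = −[z^n] G(z)^{-1}. -/

import Mathlib

/-- A plane tree (ordered rooted tree): a root together with a finite
sequence of plane trees (its root subtrees). -/
inductive PlaneTree : Type where
  | node : List PlaneTree → PlaneTree

namespace PlaneTree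

/-- The size of a plane tree: its number of vertices. -/
def size : PlaneTree → ℕ
  | node ts => 1 + (ts.attach.map fun t => size t.1).sum
decreasing_by simp only [PlaneTree.node.sizeOf_spec]; have := List.sizeOf_lt_of_mem t.2; omega

/-- The degree weight `w_deg(T) = ∏_{v ∈ T} φ_{d(v)}`, where `d(v)` is the
out-degree of the vertex `v`. -/
noncomputable def degWeight (φ : ℕ → ℝ) : PlaneTree → ℝ
  | node ts => φ ts.length * (ts.attach.map fun t => degWeight φ t.1).prod
decreasing_by simp only [PlaneTree.node.sizeOf_spec]; have := List.sizeOf_lt_of_mem t.2; omega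

/-- The hook weight `w_h(T) = ∏_{v ∈ T} ρ(h_v)`, where the hook length `h_v`
is the number of vertices of the subtree of `T` rooted at `v`. -/
noncomputable def hookWeight (ρ : ℕ → ℝ) : PlaneTree → ℝ
  | node ts => ρ (size (node ts)) * (ts.attach.map fun t => hookWeight ρ t.1).prod
decreasing_by simp only [PlaneTree.node.sizeOf_spec]; have := List.sizeOf_lt_of_mem t.2; omega

end PlaneTree

/-!
Deleting the root of a plane tree with `n + 1` vertices leaves a plane forest with `n` vertices,
so `[zⁿ⁺¹] F = ρ(n + 1) · [zⁿ] S`, where `S` is the generating function of hook-weighted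
forests.
A nonempty forest is a tree followed by a forest, so `S = 1 + F · S`, i.e. `S = (1 - F)⁻¹ = G`.
Hence `G⁻¹ = 1 - F`, and `-[zⁿ⁺¹] G⁻¹ = [zⁿ⁺¹] F = ρ(n + 1) · [zⁿ] G`.
-/

open PowerSeries Finset

section SequenceConstruction

variable {α R : Type*} (size : α → ℕ)

theorem finite_setOf_sum_map_le (hpos : ∀ a, 0 < size a) {n : ℕ}
    (hfin : {a | size a ≤ n}.Finite) : {L : List α | (L.map size).sum ≤ n}.Finite := by
  have : Finite {a // size a ≤ n} := hfin.to_subtype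
  refine ((List.finite_length_le {a // size a ≤ n} n).image (List.map Subtype.val)).subset
    fun L hL => ?_
  have hlen : L.length ≤ n := by
    have := List.length_le_sum_of_one_le (L.map size) (List.forall_mem_map.2 fun a _ => hpos a)
    simpa using this.trans hL
  obtain ⟨l, rfl⟩ : L ∈ Set.range (List.map (Subtype.val : {a | size a ≤ n} → α)) := by
    rw [Set.range_list_map_coe]
    exact fun a ha => show size a ≤ n from (List.le_sum_of_mem (List.mem_map_of_mem ha)).trans hL
  exact ⟨l, by simpa using hlen, rfl⟩

variable [CommSemiring R] [TopologicalSpace R] (w : α → R)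

noncomputable def genFun : R⟦X⟧ :=
  mk fun n => ∑' a : {a // size a = n}, w a

noncomputable def seqGenFun : R⟦X⟧ :=
  mk fun n => ∑' L : {L : List α // (L.map size).sum = n}, (L.1.map w).prod

theorem constantCoeff_genFun (hpos : ∀ a, 0 < size a) : constantCoeff (genFun size w) = 0 := by
  have : IsEmpty {a // size a = 0} := ⟨fun a => (hpos a.1).ne' a.2⟩
  simp [← coeff_zero_eq_constantCoeff_apply, genFun]

theorem constantCoeff_seqGenFun (hpos : ∀ a, 0 < size a) :
    constantCoeff (seqGenFun size w) = 1 := by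
  have hnil (L : {L : List α // (L.map size).sum = 0}) : L = ⟨[], rfl⟩ := by
    obtain ⟨_ | ⟨a, L⟩, hL⟩ := L
    · rfl
    · simp only [List.map_cons, List.sum_cons, Nat.add_eq_zero_iff] at hL
      exact absurd hL.1 (hpos a).ne'
  rw [← coeff_zero_eq_constantCoeff_apply, seqGenFun, coeff_mk,
    tsum_eq_single ⟨[], rfl⟩ fun L hL => absurd (hnil L) hL]
  simp

def consOfSigma (m : ℕ) :
    (Σ p : antidiagonal m, {a // size a = p.1.1} × {L : List α // (L.map size).sum = p.1.2}) →
      {L : List α // (L.map size).sum = m}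
  | ⟨p, a, L⟩ => ⟨a.1 :: L.1, by simp [a.2, L.2, mem_antidiagonal.1 p.2]⟩

theorem consOfSigma_bijective {m : ℕ} (hm : m ≠ 0) :
    Function.Bijective (consOfSigma size m) := by
  constructor
  · rintro ⟨p, a, L⟩ ⟨p', a', L'⟩ h
    simp only [consOfSigma, Subtype.mk.injEq, List.cons.injEq] at h
    obtain ⟨ha, hL⟩ := h
    obtain rfl : p = p' :=
      Subtype.ext (Prod.ext (by rw [← a.2, ← a'.2, ha]) (by rw [← L.2, ← L'.2, hL]))
    rw [Subtype.ext ha, Subtype.ext hL]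
  · rintro ⟨_ | ⟨a, L⟩, hL⟩
    · exact absurd hL.symm hm
    · exact
        ⟨⟨⟨(size a, (L.map size).sum), by simpa using hL⟩, ⟨a, rfl⟩, ⟨L, rfl⟩⟩, rfl⟩

theorem seqGenFun_eq_one_add_genFun_mul (hpos : ∀ a, 0 < size a)
    (hfin : ∀ n, {a | size a ≤ n}.Finite) :
    seqGenFun size w = 1 + genFun size w * seqGenFun size w := by
  have (n : ℕ) : Fintype {a // size a = n} :=
    ((hfin n).subset fun _ h => le_of_eq h).fintype
  have (n : ℕ) : Fintype {L : List α // (L.map size).sum = n} :=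
    ((finite_setOf_sum_map_le size hpos (hfin n)).subset fun _ h => le_of_eq h).fintype
  ext m
  rcases eq_or_ne m 0 with rfl | hm
  · simp [constantCoeff_seqGenFun size w hpos, constantCoeff_genFun size w hpos]
  calc coeff m (seqGenFun size w)
      = ∑ x, ((consOfSigma size m x).1.map w).prod := by
        rw [seqGenFun, coeff_mk, tsum_fintype]
        exact (Fintype.sum_bijective _ (consOfSigma_bijective size hm) _
          (fun L => (L.1.map w).prod) fun _ => rfl).symm
    _ = ∑ p : antidiagonal m,
          ∑ x : {a // size a = p.1.1} × {L : List α // (L.map size).sum = p.1.2},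
            w x.1 * (x.2.1.map w).prod := by
        rw [Fintype.sum_sigma]
        rfl
    _ = coeff m (1 + genFun size w * seqGenFun size w) := by
        simp only [map_add, coeff_one, if_neg hm, zero_add, coeff_mul, genFun, seqGenFun,
          coeff_mk, tsum_fintype, sum_mul_sum, ← Fintype.sum_prod_type']
        exact sum_coe_sort (antidiagonal m) fun p =>
          ∑ x : {a // size a = p.1} × {L : List α // (L.map size).sum = p.2},
            w x.1 * (x.2.1.map w).prod

end SequenceConstruction

namespace PlaneTree

theorem size_node (ts : List PlaneTree) : size (node ts) = 1 + (ts.map size).sum := by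
  rw [size, List.map_attach_eq_pmap, List.pmap_eq_map]

theorem hookWeight_node (ρ : ℕ → ℝ) (ts : List PlaneTree) :
    hookWeight ρ (node ts) = ρ (size (node ts)) * (ts.map (hookWeight ρ)).prod := by
  rw [hookWeight, List.map_attach_eq_pmap, List.pmap_eq_map]

theorem size_pos (T : PlaneTree) : 0 < T.size := by
  cases T
  rw [size_node]
  omega

theorem finite_setOf_size_le (n : ℕ) : {T : PlaneTree | T.size ≤ n}.Finite := by
  induction n with
  | zero => exact Set.finite_empty.subset fun T hT => absurd hT (size_pos T).not_ge
  | succ n ih =>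
    refine ((finite_setOf_sum_map_le size size_pos ih).image node).subset ?_
    rintro ⟨ts⟩ (hT : size (node ts) ≤ n + 1)
    rw [size_node] at hT
    exact ⟨ts, show _ ≤ n by omega, rfl⟩

def nodeEquiv (n : ℕ) :
    {L : List PlaneTree // (L.map size).sum = n} ≃ {T : PlaneTree // T.size = n + 1} where
  toFun L := ⟨node L.1, by rw [size_node, L.2, add_comm]⟩
  invFun
    | ⟨node ts, hT⟩ => ⟨ts, by rw [size_node] at hT; omega⟩
  left_inv _ := rfl
  right_inv
    | ⟨node _, _⟩ => rfl

theorem coeff_succ_genFun_hookWeight (ρ : ℕ → ℝ) (n : ℕ) :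
    coeff (n + 1) (genFun size (hookWeight ρ)) =
      ρ (n + 1) * coeff n (seqGenFun size (hookWeight ρ)) := by
  rw [genFun, seqGenFun, coeff_mk, coeff_mk, ← (nodeEquiv n).tsum_eq, ← tsum_mul_left]
  refine tsum_congr fun L => ?_
  rw [nodeEquiv, Equiv.coe_fn_mk, hookWeight_node, size_node, L.2, add_comm]

end PlaneTree

/-- **Hook length formula for plane forests** (forest version with
`φ(t) = 1/(1−t)`, compositional inverse `φ^{[-1]}(t) = 1 − 1/t`). With
`F` the hook-weight generating function of plane trees and `G = (1 − F)⁻¹`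
the plane forest generating function, for all `n ≥ 1`:
`ρ(n)·[z^{n-1}]G(z) = −[zⁿ] G(z)⁻¹`. -/
theorem hook_length_plane_forests
    (ρ : ℕ → ℝ) (F G : PowerSeries ℝ)
    (hF : F = PowerSeries.mk fun n =>
      ∑' T : {T : PlaneTree // T.size = n}, T.1.hookWeight ρ)
    (hG : G = (1 - F)⁻¹)
    (n : ℕ) (hn : 1 ≤ n) :
    ρ n * (PowerSeries.coeff (R := ℝ) (n - 1)) G = -(PowerSeries.coeff (R := ℝ) n) G⁻¹ := by
  obtain ⟨m, rfl⟩ := Nat.exists_eq_add_of_le' hn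
  replace hF : F = genFun PlaneTree.size (PlaneTree.hookWeight ρ) := hF
  have hF0 : constantCoeff F = 0 := by
    rw [hF, constantCoeff_genFun _ _ PlaneTree.size_pos]
  have hunit : constantCoeff (1 - F) ≠ 0 := by simp [hF0]
  have hGseq : G = seqGenFun PlaneTree.size (PlaneTree.hookWeight ρ) := by
    rw [hG, eq_comm, eq_inv_iff_mul_eq_one hunit, hF]
    linear_combination seqGenFun_eq_one_add_genFun_mul _ (PlaneTree.hookWeight ρ)
      PlaneTree.size_pos PlaneTree.finite_setOf_size_le
  have hGinv : G⁻¹ = 1 - F := by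
    rw [hG, inv_eq_iff_mul_eq_one (by simp [constantCoeff_inv, hF0])]
    exact PowerSeries.mul_inv_cancel _ hunit
  rw [hGinv, hGseq, map_sub, coeff_one, if_neg m.succ_ne_zero, hF,
    PlaneTree.coeff_succ_genFun_hookWeight]
  simp
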